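/- In the fractional-order HK model, the opinion diameter is nonincreasing relative to its initial value: d(k) = x_M(k) − x_m(k) satisfies d(k) ≤ d(0) for all k ≥ 0; in particular, if d(0) ≤ ε then all agents remain mutual neighbors for all time (the interaction graph stays complete). -/

import Mathlib

open Finset Filter Topology

/-- The Grünwald–Letnikov coefficient `a_k^{(α)} = (-1)^k * α(α-1)⋯(α-k+1)/k!`
(with `a_0 = 1`). -/
noncomputable def glCoeff (α : ℝ) (k : ℕ) : ℝ :=
  (-1) ^ k * (∏ i ∈ Finset.range k, (α - (i : ℝ))) / (Nat.factorial k : ℝ)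

/-- Neighbor set of agent `i` at time `k` (includes `i` itself). -/
noncomputable def nbr {n : ℕ} (ε : ℝ) (x : ℕ → Fin n → ℝ) (k : ℕ) (i : Fin n) :
    Finset (Fin n) :=
  Finset.univ.filter (fun j => |x k i - x k j| ≤ ε)

/-- The fractional-order Hegselmann–Krause dynamics. -/
def IsFracHK {n : ℕ} (ε α : ℝ) (x : ℕ → Fin n → ℝ) : Prop :=
  ∀ k i,
    x (k + 1) i =
      (∑ j ∈ (nbr ε x k i).erase i, x k j) / ((nbr ε x k i).card : ℝ) +
        (1 / ((nbr ε x k i).card : ℝ)) *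
          ((∑ s ∈ Finset.range k, |glCoeff α (k + 1 - s)| * x s i) +
            (1 - ∑ s ∈ Finset.range k, |glCoeff α (k + 1 - s)|) * x k i)

/-!
For `0 < α ≤ 1` the Grünwald–Letnikov coefficients satisfy `a₀ = 1` and `aₖ ≤ 0` for `k ≥ 1`,
and their partial sums stay nonnegative (`α ∑_{j ≤ m} aⱼ = -(m + 1) a_{m+1}`), so
`∑_{k ≥ 1} |aₖ| ≤ 1`. Hence each update is a convex combination of current and past opinions,
and by strong induction on time every opinion stays in `[x_m(0), x_M(0)]`.
-/

section glCoeff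

variable {α : ℝ}

@[simp] lemma glCoeff_zero (α : ℝ) : glCoeff α 0 = 1 := by simp [glCoeff]

@[simp] lemma glCoeff_one (α : ℝ) : glCoeff α 1 = -α := by simp [glCoeff]

lemma succ_mul_glCoeff_succ (α : ℝ) (k : ℕ) :
    (k + 1) * glCoeff α (k + 1) = (k - α) * glCoeff α k := by
  have hk : (k.factorial : ℝ) ≠ 0 := by positivity
  simp only [glCoeff, prod_range_succ, pow_succ, Nat.factorial_succ, Nat.cast_mul,
    Nat.cast_succ]
  field_simp
  ring

lemma glCoeff_nonpos (hα₀ : 0 ≤ α) (hα₁ : α ≤ 1) {k : ℕ} (hk : 1 ≤ k) :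
    glCoeff α k ≤ 0 := by
  induction k, hk using Nat.le_induction with
  | base => simpa using hα₀
  | succ k hk ih =>
    have hkα : 0 ≤ (k : ℝ) - α := by
      have : (1 : ℝ) ≤ k := by exact_mod_cast hk
      linarith
    have : (k + 1) * glCoeff α (k + 1) ≤ 0 :=
      succ_mul_glCoeff_succ α k ▸ mul_nonpos_of_nonneg_of_nonpos hkα ih
    exact nonpos_of_mul_nonpos_right this (by positivity)

lemma mul_sum_range_glCoeff (α : ℝ) (m : ℕ) :
    α * ∑ j ∈ range (m + 1), glCoeff α j = -((m + 1) * glCoeff α (m + 1)) := by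
  induction m with
  | zero => simp
  | succ m ih =>
    rw [sum_range_succ, mul_add, ih]
    have h := succ_mul_glCoeff_succ α (m + 1)
    push_cast at h ⊢
    linarith

lemma sum_range_glCoeff_nonneg (hα₀ : 0 < α) (hα₁ : α ≤ 1) (m : ℕ) :
    0 ≤ ∑ j ∈ range (m + 1), glCoeff α j := by
  refine nonneg_of_mul_nonneg_right ?_ hα₀
  rw [mul_sum_range_glCoeff, neg_nonneg]
  exact mul_nonpos_of_nonneg_of_nonpos (by positivity)
    (glCoeff_nonpos hα₀.le hα₁ (Nat.le_add_left 1 m))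

lemma sum_range_abs_glCoeff_le_one (hα₀ : 0 < α) (hα₁ : α ≤ 1) (k : ℕ) :
    ∑ s ∈ range k, |glCoeff α (k + 1 - s)| ≤ 1 := by
  have habs : ∀ j ∈ range (k + 1), |glCoeff α (j + 1)| = -glCoeff α (j + 1) :=
    fun j _ => abs_of_nonpos (glCoeff_nonpos hα₀.le hα₁ (Nat.le_add_left 1 j))
  calc ∑ s ∈ range k, |glCoeff α (k + 1 - s)|
      = ∑ j ∈ range k, |glCoeff α (j + 2)| := by
        rw [← sum_range_reflect]
        refine sum_congr rfl fun j hj => ?_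
        rw [show k + 1 - (k - 1 - j) = j + 2 by have := mem_range.mp hj; omega]
    _ ≤ ∑ j ∈ range (k + 1), |glCoeff α (j + 1)| := by
        rw [sum_range_succ']
        exact le_add_of_nonneg_right (abs_nonneg _)
    _ = 1 - ∑ j ∈ range (k + 2), glCoeff α j := by
        rw [sum_congr rfl habs, sum_range_succ' _ (k + 1), sum_neg_distrib, glCoeff_zero]
        ring
    _ ≤ 1 := sub_le_self _ (sum_range_glCoeff_nonneg hα₀ hα₁ (k + 1))

end glCoeff

lemma weighted_sum_mem_Icc {ι : Type*} {s : Finset ι} {w z : ι → ℝ} {m M : ℝ}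
    (hw : ∀ j ∈ s, 0 ≤ w j) (hz : ∀ j ∈ s, z j ∈ Set.Icc m M) :
    ∑ j ∈ s, w j * z j ∈ Set.Icc ((∑ j ∈ s, w j) * m) ((∑ j ∈ s, w j) * M) := by
  rw [sum_mul, sum_mul]
  exact ⟨sum_le_sum fun j hj => mul_le_mul_of_nonneg_left (hz j hj).1 (hw j hj),
    sum_le_sum fun j hj => mul_le_mul_of_nonneg_left (hz j hj).2 (hw j hj)⟩

-- The update divides by `|T| + 1` a sum of weights `1` on `T`, the memory weights `c s`, and
-- `1 - ∑ c s` on the current value: a convex combination as soon as `∑ c s ≤ 1`.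
lemma memory_average_mem_Icc {ι : Type*} {T : Finset ι} {u : ι → ℝ} {c z : ℕ → ℝ} {k : ℕ}
    {y m M : ℝ} (hu : ∀ j ∈ T, u j ∈ Set.Icc m M) (hz : ∀ s ∈ range k, z s ∈ Set.Icc m M)
    (hy : y ∈ Set.Icc m M) (hc : ∀ s ∈ range k, 0 ≤ c s) (hc₁ : ∑ s ∈ range k, c s ≤ 1) :
    (∑ j ∈ T, u j) / (#T + 1 : ℝ) +
        1 / (#T + 1 : ℝ) * (∑ s ∈ range k, c s * z s + (1 - ∑ s ∈ range k, c s) * y)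
      ∈ Set.Icc m M := by
  have hT := weighted_sum_mem_Icc (w := fun _ => (1 : ℝ)) (fun _ _ => zero_le_one) hu
  have hmem := weighted_sum_mem_Icc hc hz
  simp only [one_mul, sum_const, nsmul_eq_mul, mul_one] at hT
  have hy' : (1 - ∑ s ∈ range k, c s) * y ∈
      Set.Icc ((1 - ∑ s ∈ range k, c s) * m) ((1 - ∑ s ∈ range k, c s) * M) :=
    ⟨mul_le_mul_of_nonneg_left hy.1 (sub_nonneg.2 hc₁),
      mul_le_mul_of_nonneg_left hy.2 (sub_nonneg.2 hc₁)⟩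
  rw [one_div_mul_eq_div, ← add_div, Set.mem_Icc, le_div_iff₀ (by positivity),
    div_le_iff₀ (by positivity)]
  constructor <;> linarith [hT.1, hT.2, hmem.1, hmem.2, hy'.1, hy'.2]

namespace IsFracHK

variable {n : ℕ} {ε α : ℝ} {x : ℕ → Fin n → ℝ}

lemma self_mem_nbr (hε : 0 ≤ ε) (k : ℕ) (i : Fin n) : i ∈ nbr ε x k i := by
  simpa [nbr] using hε

lemma succ_mem_Icc (hdyn : IsFracHK ε α x) (hε : 0 ≤ ε) (hα₀ : 0 < α) (hα₁ : α ≤ 1)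
    {m M : ℝ} {k : ℕ} (h : ∀ s ≤ k, ∀ j, x s j ∈ Set.Icc m M) (i : Fin n) :
    x (k + 1) i ∈ Set.Icc m M := by
  have hcard : (#(nbr ε x k i) : ℝ) = #((nbr ε x k i).erase i) + 1 := by
    rw [card_erase_of_mem (self_mem_nbr hε k i),
      Nat.cast_pred (card_pos.2 ⟨i, self_mem_nbr hε k i⟩)]
    ring
  rw [hdyn k i, hcard]
  exact memory_average_mem_Icc (fun j _ => h k le_rfl j)
    (fun s hs => h s (mem_range.1 hs).le i) (h k le_rfl i) (fun _ _ => abs_nonneg _)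
    (sum_range_abs_glCoeff_le_one hα₀ hα₁ k)

lemma mem_Icc (hdyn : IsFracHK ε α x) (hε : 0 ≤ ε) (hα₀ : 0 < α) (hα₁ : α ≤ 1)
    {m M : ℝ} (h₀ : ∀ i, x 0 i ∈ Set.Icc m M) (k : ℕ) (i : Fin n) :
    x k i ∈ Set.Icc m M := by
  induction k using Nat.strong_induction_on generalizing i with
  | _ k ih =>
    cases k with
    | zero => exact h₀ i
    | succ k =>
      exact hdyn.succ_mem_Icc hε hα₀ hα₁ (fun s hs => ih s (Nat.lt_succ_of_le hs)) i

end IsFracHK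

theorem fracHK_diameter_le_initial_general {n : ℕ} (hn : 0 < n) (ε α : ℝ)
    (hε : ε ∈ Set.Ioc (0:ℝ) 1) (hα : α ∈ Set.Ioo (0:ℝ) 1)
    (x : ℕ → Fin n → ℝ)
    (hdyn : IsFracHK ε α x)
    (hne : (Finset.univ : Finset (Fin n)).Nonempty := Finset.univ_nonempty_iff.2 ⟨⟨0, hn⟩⟩) :
    (∀ k, Finset.univ.sup' hne (x k) - Finset.univ.inf' hne (x k) ≤
        Finset.univ.sup' hne (x 0) - Finset.univ.inf' hne (x 0)) ∧
      (Finset.univ.sup' hne (x 0) - Finset.univ.inf' hne (x 0) ≤ ε →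
        ∀ k (i j : Fin n), j ∈ nbr ε x k i) := by
  have hbound : ∀ k i, x k i ∈ Set.Icc (univ.inf' hne (x 0)) (univ.sup' hne (x 0)) :=
    hdyn.mem_Icc hε.1.le hα.1 hα.2.le fun i =>
      ⟨inf'_le _ (mem_univ i), le_sup' _ (mem_univ i)⟩
  refine ⟨fun k => ?_, fun hd k i j => ?_⟩
  · have hsup : univ.sup' hne (x k) ≤ univ.sup' hne (x 0) := sup'_le _ _ fun i _ => (hbound k i).2
    have hinf : univ.inf' hne (x 0) ≤ univ.inf' hne (x k) := le_inf' _ _ fun i _ => (hbound k i).1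
    linarith
  · simp only [nbr, mem_filter, mem_univ, true_and]
    exact (abs_sub_le_of_le_of_le (hbound k i).1 (hbound k i).2 (hbound k j).1
      (hbound k j).2).trans hd

theorem fracHK_diameter_le_initial {n : ℕ} (hn : 0 < n) (ε α : ℝ)
    (hε : ε ∈ Set.Ioc (0:ℝ) 1) (hα : α ∈ Set.Ioo (0:ℝ) 1)
    (x : ℕ → Fin n → ℝ) (hx0 : ∀ i, x 0 i ∈ Set.Icc (0:ℝ) 1)
    (hdyn : IsFracHK ε α x)
    (hne : (Finset.univ : Finset (Fin n)).Nonempty := Finset.univ_nonempty_iff.2 ⟨⟨0, hn⟩⟩) :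
    (∀ k, Finset.univ.sup' hne (x k) - Finset.univ.inf' hne (x k) ≤
        Finset.univ.sup' hne (x 0) - Finset.univ.inf' hne (x 0)) ∧
      (Finset.univ.sup' hne (x 0) - Finset.univ.inf' hne (x 0) ≤ ε →
        ∀ k (i j : Fin n), j ∈ nbr ε x k i) :=
  fracHK_diameter_le_initial_general hn ε α hε hα x hdyn hne
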